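/- arXiv:1909.08426 — 4 statements merged into one kernel-verified Lean document; each statement's English description precedes it below -/
import Mathlib

section
/- Let γ ≥ 0 and c ≥ max(2, γ+2) be real constants, and let n₁, n₂, n, u be positive integers with n₁ + n₂ + u = n and min(n₁, n₂) > u. Then n^γ + (n₁+u)^c + (n₂+u)^c < n^c. -/
open Real

/-! Write `A = n₁ + u`, `B = n₂ + u`. Since `A, B ≤ n`, each of `A^c, B^c` is at most
`A^2 n^(c-2)`, `B^2 n^(c-2)`, and `n^γ ≤ n^(c-2)`; so it suffices that `1 + A^2 + B^2 < n^2`,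
and indeed `n^2 - A^2 - B^2 = 2 n₁ n₂ - u^2 ≥ 2 (u+1)^2 - u^2 > 1`. -/

theorem Real.rpow_le_sq_mul_rpow_sub_two {x N c : ℝ} (hx : 0 ≤ x) (hxN : x ≤ N) (hc : 2 ≤ c) :
    x ^ c ≤ x ^ 2 * N ^ (c - 2) := by
  have hsplit : x ^ c = x ^ 2 * x ^ (c - 2) := by
    rw [← rpow_two, ← rpow_add' hx (by linarith)]
    ring_nf
  rw [hsplit]
  gcongr

theorem one_add_sq_add_sq_lt_sq {a b u : ℝ} (hu : 0 ≤ u) (ha : u + 1 ≤ a) (hb : u + 1 ≤ b) :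
    1 + (a + u) ^ 2 + (b + u) ^ 2 < (a + b + u) ^ 2 := by
  nlinarith [mul_le_mul ha hb (by linarith) (by linarith)]

theorem rpow_add_rpow_add_rpow_lt {γ c N A B : ℝ} (hc : 2 ≤ c) (hγc : γ ≤ c - 2) (hN : 1 ≤ N)
    (hA : 0 ≤ A) (hAN : A ≤ N) (hB : 0 ≤ B) (hBN : B ≤ N) (hquad : 1 + A ^ 2 + B ^ 2 < N ^ 2) :
    N ^ γ + A ^ c + B ^ c < N ^ c :=
  calc N ^ γ + A ^ c + B ^ c
      ≤ N ^ (c - 2) + A ^ 2 * N ^ (c - 2) + B ^ 2 * N ^ (c - 2) := by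
        gcongr ?_ + ?_ + ?_
        · exact rpow_le_rpow_of_exponent_le hN hγc
        · exact rpow_le_sq_mul_rpow_sub_two hA hAN hc
        · exact rpow_le_sq_mul_rpow_sub_two hB hBN hc
    _ = (1 + A ^ 2 + B ^ 2) * N ^ (c - 2) := by ring
    _ < N ^ 2 * N ^ (c - 2) := by gcongr
    _ = N ^ c := by
        rw [← rpow_two, ← rpow_add (by linarith)]
        ring_nf

theorem almost_split_bound_general (γ c : ℝ) (hc : max 2 (γ + 2) ≤ c)
    (n₁ n₂ n u : ℕ)
    (hsum : n₁ + n₂ + u = n) (hmin : u < min n₁ n₂) :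
    (n : ℝ) ^ γ + ((n₁ : ℝ) + u) ^ c + ((n₂ : ℝ) + u) ^ c < (n : ℝ) ^ c := by
  obtain ⟨h2c, hγc⟩ := max_le_iff.mp hc
  obtain ⟨hu₁, hu₂⟩ := lt_min_iff.mp hmin
  have hn₁ : (u : ℝ) + 1 ≤ n₁ := by exact_mod_cast hu₁
  have hn₂ : (u : ℝ) + 1 ≤ n₂ := by exact_mod_cast hu₂
  subst hsum
  push_cast
  exact rpow_add_rpow_add_rpow_lt h2c (by linarith) (by linarith) (by positivity) (by linarith)
    (by positivity) (by linarith) (one_add_sq_add_sq_lt_sq (Nat.cast_nonneg u) hn₁ hn₂)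

/-- Lemma 3.6: if `n₁ + n₂ + u = n`, `min n₁ n₂ > u`, `γ ≥ 0` and `c ≥ max 2 (γ+2)`,
then `n^γ + (n₁+u)^c + (n₂+u)^c < n^c`. -/
theorem almost_split_bound (γ c : ℝ) (hγ : 0 ≤ γ) (hc : max 2 (γ + 2) ≤ c)
    (n₁ n₂ n u : ℕ) (hn₁ : 0 < n₁) (hn₂ : 0 < n₂) (hn : 0 < n) (hu : 0 < u)
    (hsum : n₁ + n₂ + u = n) (hmin : u < min n₁ n₂) :
    (n : ℝ) ^ γ + ((n₁ : ℝ) + u) ^ c + ((n₂ : ℝ) + u) ^ c < (n : ℝ) ^ c :=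
  almost_split_bound_general γ c hc n₁ n₂ n u hsum hmin
end

section
/- Every connected graph that contains no induced claw (K_{1,3}) and no induced paw is either an induced path, an induced cycle, or the complement of a (not necessarily perfect) matching. -/
/-- The claw `K_{1,3}`: center `0`, leaves `1, 2, 3`. -/
def clawGraph : SimpleGraph (Fin 4) :=
  SimpleGraph.fromRel fun i j => ((i : ℕ), (j : ℕ)) ∈ [(0, 1), (0, 2), (0, 3)]

/-- The paw: the claw plus one edge (a triangle with a pendant vertex). -/
def pawGraph : SimpleGraph (Fin 4) :=
  SimpleGraph.fromRel fun i j => ((i : ℕ), (j : ℕ)) ∈ [(0, 1), (0, 2), (0, 3), (1, 2)]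

/-!
If `G` contains a triangle, paw-freeness propagates along edges: every edge lies on a triangle,
and every vertex lies on or next to every triangle. A vertex missing both ends of an edge would
therefore be adjacent to the third vertex of a triangle on that edge and span a paw with it, so
`G` is complete multipartite; claw-freeness bounds the parts by two, which says that every vertex
has at most one non-neighbour.

If `G` is triangle-free, claw-freeness bounds all degrees by two. A longest path contains all
neighbours of its ends and its interior vertices have no further neighbours, so it spans `G`,
and the only possible chord joins its two ends: `G` is a path or a cycle.
-/

namespace SimpleGraph

variable {V : Type*} {G : SimpleGraph V}

lemma adj_or_adj_or_adj_of_isEmpty_clawEmbedding (hclaw : IsEmpty (clawGraph ↪g G))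
    {x a b c : V} (ha : G.Adj x a) (hb : G.Adj x b) (hc : G.Adj x c)
    (hab : a ≠ b) (hac : a ≠ c) (hbc : b ≠ c) :
    G.Adj a b ∨ G.Adj a c ∨ G.Adj b c := by
  by_contra! ⟨hab', hac', hbc'⟩
  refine hclaw.false ⟨⟨![x, a, b, c], fun i j hij => ?_⟩, fun {i j} => ?_⟩
  · fin_cases i <;> fin_cases j <;>
      simp_all [ha.ne, hb.ne, hc.ne, ha.ne', hb.ne', hc.ne', eq_comm]
  · change G.Adj (![x, a, b, c] i) (![x, a, b, c] j) ↔ _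
    fin_cases i <;> fin_cases j <;> simp [clawGraph, adj_comm, *]

lemma eq_or_eq_or_adj_or_adj_of_isEmpty_pawEmbedding (hpaw : IsEmpty (pawGraph ↪g G))
    {x y z d : V} (hxy : G.Adj x y) (hxz : G.Adj x z) (hyz : G.Adj y z) (hxd : G.Adj x d) :
    d = y ∨ d = z ∨ G.Adj y d ∨ G.Adj z d := by
  by_contra! ⟨hdy, hdz, hyd, hzd⟩
  refine hpaw.false ⟨⟨![x, y, z, d], fun i j hij => ?_⟩, fun {i j} => ?_⟩
  · fin_cases i <;> fin_cases j <;>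
      simp_all [hxy.ne, hxz.ne, hyz.ne, hxd.ne, hxy.ne', hxz.ne', hyz.ne', hxd.ne', eq_comm]
  · change G.Adj (![x, y, z, d] i) (![x, y, z, d] j) ↔ _
    fin_cases i <;> fin_cases j <;> simp [pawGraph, adj_comm, *]

lemma Preconnected.induction_on_adj (hG : G.Preconnected) {P : V → Prop}
    (hstep : ∀ ⦃u v⦄, G.Adj u v → P u → P v) {a : V} (ha : P a) : ∀ v, P v := by
  intro v
  obtain ⟨p⟩ := hG a v
  induction p with
  | nil => exact ha
  | cons h _ ih => exact ih (hstep h ha)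

lemma exists_adj_adj_of_adj_of_isEmpty_pawEmbedding (hpaw : IsEmpty (pawGraph ↪g G))
    {u p q v : V} (hup : G.Adj u p) (huq : G.Adj u q) (hpq : G.Adj p q) (huv : G.Adj u v) :
    ∃ s, G.Adj u s ∧ G.Adj v s := by
  rcases eq_or_eq_or_adj_or_adj_of_isEmpty_pawEmbedding hpaw hup huq hpq huv with
    rfl | rfl | hpv | hqv
  exacts [⟨q, huq, hpq⟩, ⟨p, hup, hpq.symm⟩, ⟨p, hup, hpv.symm⟩, ⟨q, huq, hqv.symm⟩]

lemma Preconnected.exists_adj_adj_of_adj (hG : G.Preconnected) (hpaw : IsEmpty (pawGraph ↪g G))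
    {x y z : V} (hxy : G.Adj x y) (hxz : G.Adj x z) (hyz : G.Adj y z) {u v : V}
    (huv : G.Adj u v) : ∃ s, G.Adj u s ∧ G.Adj v s := by
  have hmem : ∀ w, ∃ p q, G.Adj w p ∧ G.Adj w q ∧ G.Adj p q := by
    refine hG.induction_on_adj (fun w w' hww' ⟨p, q, hwp, hwq, hpq⟩ => ?_)
      ⟨y, z, hxy, hxz, hyz⟩
    obtain ⟨s, hws, hw's⟩ := exists_adj_adj_of_adj_of_isEmpty_pawEmbedding hpaw hwp hwq hpq hww'
    exact ⟨w, s, hww'.symm, hw's, hws⟩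
  obtain ⟨p, q, hup, huq, hpq⟩ := hmem u
  exact exists_adj_adj_of_adj_of_isEmpty_pawEmbedding hpaw hup huq hpq huv

lemma eq_or_adj_of_adj_of_adj_triangle (hpaw : IsEmpty (pawGraph ↪g G)) {x y z w u : V}
    (hxy : G.Adj x y) (hxz : G.Adj x z) (hyz : G.Adj y z) (hxw : G.Adj x w) (hwu : G.Adj w u) :
    u = x ∨ u = y ∨ u = z ∨ G.Adj x u ∨ G.Adj y u ∨ G.Adj z u := by
  rcases eq_or_eq_or_adj_or_adj_of_isEmpty_pawEmbedding hpaw hxy hxz hyz hxw with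
    rfl | rfl | hyw | hzw
  · tauto
  · tauto
  · have := eq_or_eq_or_adj_or_adj_of_isEmpty_pawEmbedding hpaw hxw.symm hyw.symm hxy hwu
    tauto
  · have := eq_or_eq_or_adj_or_adj_of_isEmpty_pawEmbedding hpaw hxw.symm hzw.symm hxz hwu
    tauto

lemma Preconnected.eq_or_adj_triangle (hG : G.Preconnected) (hpaw : IsEmpty (pawGraph ↪g G))
    {x y z : V} (hxy : G.Adj x y) (hxz : G.Adj x z) (hyz : G.Adj y z) :
    ∀ v, v = x ∨ v = y ∨ v = z ∨ G.Adj x v ∨ G.Adj y v ∨ G.Adj z v := by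
  refine hG.induction_on_adj (fun w u hwu hw => ?_) (Or.inl rfl)
  rcases hw with rfl | rfl | rfl | hxw | hyw | hzw
  · tauto
  · tauto
  · tauto
  · exact eq_or_adj_of_adj_of_adj_triangle hpaw hxy hxz hyz hxw hwu
  · have := eq_or_adj_of_adj_of_adj_triangle hpaw hxy.symm hyz hxz hyw hwu
    tauto
  · have := eq_or_adj_of_adj_of_adj_triangle hpaw hxz.symm hyz.symm hxy hzw hwu
    tauto

theorem Preconnected.isCompleteMultipartite_of_isEmpty_pawEmbedding (hG : G.Preconnected)
    (hpaw : IsEmpty (pawGraph ↪g G)) (h3 : ¬ G.CliqueFree 3) : G.IsCompleteMultipartite := by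
  classical
  obtain ⟨t, ht⟩ : ∃ t, G.IsNClique 3 t := by simpa [CliqueFree] using h3
  obtain ⟨x, y, z, hxy, hxz, hyz, -⟩ := is3Clique_iff.1 ht
  by_contra hmp
  obtain ⟨v, w₁, w₂, h⟩ := exists_isPathGraph3Compl_of_not_isCompleteMultipartite hmp
  obtain ⟨s, h₁s, h₂s⟩ := hG.exists_adj_adj_of_adj hpaw hxy hxz hyz h.adj
  rcases hG.eq_or_adj_triangle hpaw h.adj h₁s h₂s v with rfl | rfl | rfl | h₁v | h₂v | hsv
  · exact h.ne_fst rfl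
  · exact h.ne_snd rfl
  · exact h.not_adj_fst h₁s.symm
  · exact h.not_adj_fst h₁v.symm
  · exact h.not_adj_snd h₂v.symm
  · rcases eq_or_eq_or_adj_or_adj_of_isEmpty_pawEmbedding hpaw h₁s.symm h₂s.symm h.adj hsv with
      rfl | rfl | h₁v | h₂v
    · exact h.ne_fst rfl
    · exact h.ne_snd rfl
    · exact h.not_adj_fst h₁v.symm
    · exact h.not_adj_snd h₂v.symm

lemma IsCompleteMultipartite.subsingleton_nonadj (hmp : G.IsCompleteMultipartite)
    (hG : G.Preconnected) (hclaw : IsEmpty (clawGraph ↪g G)) (v : V) :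
    {w : V | w ≠ v ∧ ¬ G.Adj v w}.Subsingleton := by
  rintro w₁ ⟨h₁v, hv₁⟩ w₂ ⟨h₂v, hv₂⟩
  by_contra h₁₂
  have : Nontrivial V := ⟨v, w₁, h₁v.symm⟩
  obtain ⟨u, hvu⟩ := hG.exists_adj_of_nontrivial v
  have hu : ∀ w, ¬ G.Adj v w → G.Adj u w := fun w hvw =>
    of_not_not fun huw => hmp.trans _ _ _ huw (fun h => hvw h.symm) hvu.symm
  rcases adj_or_adj_or_adj_of_isEmpty_clawEmbedding hclaw hvu.symm (hu _ hv₁) (hu _ hv₂)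
    h₁v.symm h₂v.symm h₁₂ with h | h | h
  · exact hv₁ h
  · exact hv₂ h
  · exact hmp.trans _ _ _ (fun h' => hv₁ h'.symm) hv₂ h

def MaxDegreeLeTwo (G : SimpleGraph V) : Prop :=
  ∀ ⦃x a b c⦄, G.Adj x a → G.Adj x b → G.Adj x c → a ≠ b → c = a ∨ c = b

lemma maxDegreeLeTwo_of_isEmpty_clawEmbedding (hclaw : IsEmpty (clawGraph ↪g G))
    (h3 : G.CliqueFree 3) : G.MaxDegreeLeTwo := by
  classical
  intro x a b c ha hb hc hab
  by_contra! ⟨hca, hcb⟩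
  have triangle_free : ∀ ⦃a b⦄, G.Adj x a → G.Adj x b → ¬ G.Adj a b := fun a b ha hb h =>
    h3 {x, a, b} (is3Clique_triple_iff.2 ⟨ha, hb, h⟩)
  rcases adj_or_adj_or_adj_of_isEmpty_clawEmbedding hclaw ha hb hc hab hca.symm hcb.symm with
    h | h | h
  exacts [triangle_free ha hb h, triangle_free ha hc h, triangle_free hb hc h]

namespace Walk

variable {u v : V} {p : G.Walk u v}

lemma IsPath.eq_or_eq_of_adj_getVert (hdeg : G.MaxDegreeLeTwo) (hp : p.IsPath) {i : ℕ}
    (hi : 0 < i) (hin : i < p.length) {w : V} (hw : G.Adj (p.getVert i) w) :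
    w = p.getVert (i - 1) ∨ w = p.getVert (i + 1) := by
  have hpred : G.Adj (p.getVert i) (p.getVert (i - 1)) := by
    simpa [Nat.sub_add_cancel hi] using (p.adj_getVert_succ (i := i - 1) (by omega)).symm
  refine hdeg hpred (p.adj_getVert_succ hin) hw fun h => ?_
  have := hp.getVert_injOn (by simp; omega) (by simp; omega) h
  omega

lemma IsPath.succ_eq_or_of_adj_getVert (hdeg : G.MaxDegreeLeTwo) (hp : p.IsPath) {i j : ℕ}
    (hij : i < j) (hj : j ≤ p.length) (h : G.Adj (p.getVert i) (p.getVert j)) :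
    i + 1 = j ∨ (i = 0 ∧ j = p.length) := by
  have inj : ∀ {a b}, a ≤ p.length → b ≤ p.length → p.getVert a = p.getVert b → a = b :=
    fun ha hb hab => hp.getVert_injOn ha hb hab
  rcases Nat.eq_zero_or_pos i with rfl | hi
  · by_cases hjn : j = p.length
    · exact Or.inr ⟨rfl, hjn⟩
    rcases hp.eq_or_eq_of_adj_getVert hdeg hij (by omega) h.symm with h0 | h0
    · have := inj (by omega) (by omega) h0; omega
    · have := inj (by omega) (by omega) h0; omega
  · rcases hp.eq_or_eq_of_adj_getVert hdeg hi (by omega) h with hj' | hj'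
    · have := inj (by omega) (by omega) hj'; omega
    · exact Or.inl (inj (by omega) hj hj'.symm)

lemma IsPath.adj_getVert_iff (hdeg : G.MaxDegreeLeTwo) (hp : p.IsPath) {i j : ℕ}
    (hi : i ≤ p.length) (hj : j ≤ p.length) :
    G.Adj (p.getVert i) (p.getVert j) ↔
      i + 1 = j ∨ j + 1 = i ∨
        G.Adj u v ∧ (i = 0 ∧ j = p.length ∨ j = 0 ∧ i = p.length) := by
  constructor
  · intro h
    rcases lt_trichotomy i j with hij | rfl | hij
    · rcases hp.succ_eq_or_of_adj_getVert hdeg hij hj h with h' | ⟨rfl, rfl⟩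
      · exact Or.inl h'
      · simp_all
    · exact absurd h (G.irrefl)
    · rcases hp.succ_eq_or_of_adj_getVert hdeg hij hi h.symm with h' | ⟨rfl, rfl⟩
      · exact Or.inr (Or.inl h')
      · simp_all [adj_comm]
  · rintro (rfl | rfl | ⟨huv, ⟨rfl, rfl⟩ | ⟨rfl, rfl⟩⟩)
    · exact p.adj_getVert_succ (by omega)
    · exact (p.adj_getVert_succ (by omega)).symm
    · simpa using huv
    · simpa using huv.symm

lemma IsPath.mem_support_of_adj_start (hp : p.IsPath)
    (hmax : ∀ a b (q : G.Walk a b), q.IsPath → q.length ≤ p.length) {w : V} (hw : G.Adj w u) :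
    w ∈ p.support := by
  by_contra h
  have := hmax _ _ (cons hw p) (hp.cons h)
  simp at this

lemma IsPath.mem_support_of_forall_length_le (hG : G.Preconnected) (hdeg : G.MaxDegreeLeTwo)
    (hp : p.IsPath) (hmax : ∀ a b (q : G.Walk a b), q.IsPath → q.length ≤ p.length) :
    ∀ w, w ∈ p.support := by
  refine hG.induction_on_adj (fun a b hab ha => ?_) p.start_mem_support
  obtain ⟨i, rfl, hi⟩ := mem_support_iff_exists_getVert.1 ha
  rcases Nat.eq_zero_or_pos i with rfl | hi0
  · exact hp.mem_support_of_adj_start hmax (by simpa using hab.symm)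
  rcases hi.eq_or_lt with rfl | hin
  · simpa using hp.reverse.mem_support_of_adj_start (by simpa using hmax) (by simpa using hab.symm)
  rcases hp.eq_or_eq_of_adj_getVert hdeg hi0 hin hab with rfl | rfl <;>
    exact p.getVert_mem_support _

end Walk

lemma exists_isPath_forall_length_le [Finite V] [Nonempty V] :
    ∃ (u v : V) (p : G.Walk u v), p.IsPath ∧
      ∀ a b (q : G.Walk a b), q.IsPath → q.length ≤ p.length := by
  have := Fintype.ofFinite V
  let S : Set ℕ := {n | ∃ (a b : V) (q : G.Walk a b), q.IsPath ∧ q.length = n}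
  have hS : S.Nonempty := ⟨0, Classical.arbitrary V, _, .nil, .nil, rfl⟩
  have hbdd : BddAbove S :=
    ⟨Fintype.card V, by rintro _ ⟨a, b, q, hq, rfl⟩; exact hq.length_lt.le⟩
  obtain ⟨u, v, p, hp, hlen⟩ := Nat.sSup_mem hS hbdd
  exact ⟨u, v, p, hp, fun a b q hq => hlen ▸ le_csSup hbdd ⟨a, b, q, hq, rfl⟩⟩

lemma cycleGraph_adj_iff_val {n : ℕ} (hn : 1 ≤ n) {i j : Fin (n + 1)} :
    (cycleGraph (n + 1)).Adj i j ↔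
      (i : ℕ) + 1 = j ∨ (j : ℕ) + 1 = i ∨
        ((i : ℕ) = 0 ∧ (j : ℕ) = n ∨ (j : ℕ) = 0 ∧ (i : ℕ) = n) := by
  rw [cycleGraph_adj']
  rcases lt_trichotomy i j with h | rfl | h
  · rw [Fin.coe_sub_iff_lt.2 h, Fin.sub_val_of_le h.le]; omega
  · simp only [sub_self, Fin.val_zero]; omega
  · rw [Fin.sub_val_of_le h.le, Fin.coe_sub_iff_lt.2 h]; omega

theorem Connected.nonempty_iso_pathGraph_or_cycleGraph [Finite V] (hG : G.Connected)
    (hdeg : G.MaxDegreeLeTwo) :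
    (∃ n, Nonempty (G ≃g pathGraph n)) ∨ (∃ n, Nonempty (G ≃g cycleGraph n)) := by
  have := hG.nonempty
  obtain ⟨u, v, p, hp, hmax⟩ := exists_isPath_forall_length_le (G := G)
  have hinj : Function.Injective fun i : Fin (p.length + 1) => p.getVert i := fun i j hij =>
    Fin.ext (hp.getVert_injOn (by simp; omega) (by simp; omega) hij)
  have hsurj : Function.Surjective fun i : Fin (p.length + 1) => p.getVert i := fun w => by
    obtain ⟨i, hi, hil⟩ := Walk.mem_support_iff_exists_getVert.1
      (hp.mem_support_of_forall_length_le hG.preconnected hdeg hmax w)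
    exact ⟨⟨i, by omega⟩, hi⟩
  let e := Equiv.ofBijective _ ⟨hinj, hsurj⟩
  have he (i j : Fin (p.length + 1)) :=
    hp.adj_getVert_iff hdeg (Nat.le_of_lt_succ i.2) (Nat.le_of_lt_succ j.2)
  by_cases huv : G.Adj u v
  · have hlen : 1 ≤ p.length := Nat.pos_of_ne_zero fun h => huv.ne (p.eq_of_length_eq_zero h)
    refine Or.inr ⟨_, ⟨(RelIso.symm ⟨e, fun {i j} => ?_⟩)⟩⟩
    exact (he i j).trans (by rw [cycleGraph_adj_iff_val hlen]; simp [huv])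
  · refine Or.inl ⟨_, ⟨(RelIso.symm ⟨e, fun {i j} => ?_⟩)⟩⟩
    exact (he i j).trans (by rw [pathGraph_adj]; simp [huv])

end SimpleGraph

/-- Lemma 5.9: every connected {claw, paw}-free graph is a path, a cycle, or the
complement of a (not necessarily perfect) matching, i.e. a graph in which every
vertex has at most one non-neighbor. -/
theorem claw_paw_free_structure {V : Type*} [Fintype V] (G : SimpleGraph V)
    (hconn : G.Connected)
    (hclaw : IsEmpty (clawGraph ↪g G)) (hpaw : IsEmpty (pawGraph ↪g G)) :
    (∃ n, Nonempty (G ≃g SimpleGraph.pathGraph n)) ∨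
    (∃ n, Nonempty (G ≃g SimpleGraph.cycleGraph n)) ∨
    (∀ v : V, {w : V | w ≠ v ∧ ¬ G.Adj v w}.Subsingleton) := by
  by_cases h3 : G.CliqueFree 3
  · exact Or.imp_right Or.inl <| hconn.nonempty_iso_pathGraph_or_cycleGraph
      (SimpleGraph.maxDegreeLeTwo_of_isEmpty_clawEmbedding hclaw h3)
  · exact Or.inr <| Or.inr <| (hconn.preconnected.isCompleteMultipartite_of_isEmpty_pawEmbedding
      hpaw h3).subsingleton_nonadj hconn.preconnected hclaw
end

section
/- Let G be a cricket-free graph containing an induced K_{2,3} with sides X (of size 2) and Y (of size 3). Then every vertex a ∉ X ∪ Y adjacent to some vertex of X and some vertex of Y is adjacent to at least two vertices of Y. -/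
/-- The cricket `T(1,1,2)`: a triangle `0, 1, 2` together with two further vertices
`3, 4`, non-adjacent to each other, both adjacent only to `0`. -/
def cricketGraph : SimpleGraph (Fin 5) :=
  SimpleGraph.fromRel fun i j =>
    ((i : ℕ), (j : ℕ)) ∈ [(0, 1), (0, 2), (1, 2), (0, 3), (0, 4)]

/-!
Let `x ∈ X` and `y ∈ Y` be neighbours of `a`. If `a` missed the other two vertices `y', y''` of `Y`,
then `x, a, y` would be a triangle and `y', y''` two non-adjacent pendant vertices at `x`, i.e. an
induced cricket.
-/

namespace SimpleGraph

variable {V : Type*} (G : SimpleGraph V)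

theorem nonempty_cricketGraph_embedding {c t u p q : V}
    (hct : G.Adj c t) (hcu : G.Adj c u) (htu : G.Adj t u) (hcp : G.Adj c p) (hcq : G.Adj c q)
    (htp : ¬ G.Adj t p) (htq : ¬ G.Adj t q) (hup : ¬ G.Adj u p) (huq : ¬ G.Adj u q)
    (hpq : ¬ G.Adj p q) (htp' : t ≠ p) (htq' : t ≠ q) (hup' : u ≠ p) (huq' : u ≠ q)
    (hpq' : p ≠ q) :
    Nonempty (cricketGraph ↪g G) := by
  have hinj : Function.Injective ![c, t, u, p, q] := by
    simp only [Matrix.vecCons, Fin.cons_injective_iff, Matrix.range_empty]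
    simp [hct.ne, hcu.ne, htu.ne, hcp.ne, hcq.ne, htp', htq', hup', huq', hpq',
      Function.injective_of_subsingleton]
  refine ⟨⟨⟨_, hinj⟩, fun {i j} => ?_⟩⟩
  fin_cases i <;> fin_cases j <;> simp [cricketGraph, fromRel_adj, G.adj_comm, *]

theorem adj_or_adj_of_isEmpty_cricketGraph_embedding (hfree : IsEmpty (cricketGraph ↪g G))
    {x a y₀ y₁ y₂ : V} (hx₀ : G.Adj x y₀) (hx₁ : G.Adj x y₁) (hx₂ : G.Adj x y₂)
    (h₀₁ : ¬ G.Adj y₀ y₁) (h₀₂ : ¬ G.Adj y₀ y₂) (h₁₂ : ¬ G.Adj y₁ y₂) (hne : y₁ ≠ y₂)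
    (hax : G.Adj a x) (ha₀ : G.Adj a y₀) :
    G.Adj a y₁ ∨ G.Adj a y₂ := by
  by_contra! h
  obtain ⟨ha₁, ha₂⟩ := h
  refine hfree.false (nonempty_cricketGraph_embedding G hax.symm hx₀ ha₀ hx₁ hx₂ ha₁ ha₂ h₀₁ h₀₂
    h₁₂ ?_ ?_ ?_ ?_ hne).some
  · rintro rfl; exact h₀₁ ha₀.symm
  · rintro rfl; exact h₀₂ ha₀.symm
  · rintro rfl; exact ha₁ ha₀
  · rintro rfl; exact ha₂ ha₀

end SimpleGraph

theorem cricket_free_K23_neighbors_general {V : Type*} (G : SimpleGraph V)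
    [DecidableRel G.Adj]
    (hfree : IsEmpty (cricketGraph ↪g G))
    (X : Fin 2 → V) (Y : Fin 3 → V)
    (hYinj : Function.Injective Y)
    (hYindep : ∀ i j, i ≠ j → ¬ G.Adj (Y i) (Y j))
    (hcomplete : ∀ i j, G.Adj (X i) (Y j))
    (a : V)
    (haXadj : ∃ i, G.Adj a (X i)) (haYadj : ∃ j, G.Adj a (Y j)) :
    2 ≤ (Finset.univ.filter fun j : Fin 3 => G.Adj a (Y j)).card := by
  obtain ⟨i, hi⟩ := haXadj
  obtain ⟨j, hj⟩ := haYadj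
  obtain ⟨h₁, h₂, h₁₂⟩ : j + 1 ≠ j ∧ j + 2 ≠ j ∧ j + 1 ≠ j + 2 := by
    fin_cases j <;> decide
  obtain ⟨k, hkj, hk⟩ : ∃ k ≠ j, G.Adj a (Y k) := by
    rcases G.adj_or_adj_of_isEmpty_cricketGraph_embedding hfree (hcomplete i j)
      (hcomplete i (j + 1)) (hcomplete i (j + 2)) (hYindep _ _ h₁.symm) (hYindep _ _ h₂.symm)
      (hYindep _ _ h₁₂) (hYinj.ne h₁₂) hi hj with h | h
    exacts [⟨_, h₁, h⟩, ⟨_, h₂, h⟩]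
  exact Finset.one_lt_card.mpr ⟨k, by simpa using hk, j, by simpa using hj, hkj⟩

/-- In a cricket-free graph containing an induced `K_{2,3}` with sides
`X 0, X 1` and `Y 0, Y 1, Y 2`, every vertex `a` outside the `K_{2,3}` adjacent to
some vertex of `X` and some vertex of `Y` is adjacent to at least two vertices of `Y`. -/
theorem cricket_free_K23_neighbors {V : Type*} [DecidableEq V] (G : SimpleGraph V)
    [DecidableRel G.Adj]
    (hfree : IsEmpty (cricketGraph ↪g G))
    (X : Fin 2 → V) (Y : Fin 3 → V)
    (hXinj : Function.Injective X) (hYinj : Function.Injective Y)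
    (hXY : ∀ i j, X i ≠ Y j)
    (hXindep : ∀ i j, i ≠ j → ¬ G.Adj (X i) (X j))
    (hYindep : ∀ i j, i ≠ j → ¬ G.Adj (Y i) (Y j))
    (hcomplete : ∀ i j, G.Adj (X i) (Y j))
    (a : V) (haX : a ∉ Set.range X) (haY : a ∉ Set.range Y)
    (haXadj : ∃ i, G.Adj a (X i)) (haYadj : ∃ j, G.Adj a (Y j)) :
    2 ≤ (Finset.univ.filter fun j : Fin 3 => G.Adj a (Y j)).card :=
  cricket_free_K23_neighbors_general G hfree X Y hYinj hYindep hcomplete a haXadj haYadj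
end

section
/- Let G be a connected {claw, bull}-free graph with maximum degree at most Δ, and let P be a maximum-length induced path in G of length at least 14. Then P dominates G, i.e., every vertex of G is in the closed neighborhood of V(P). -/
/-- The bull: a triangle `0, 1, 2` with pendant vertices `3` (adjacent to `1`) and
`4` (adjacent to `2`). -/
def bullGraph : SimpleGraph (Fin 5) :=
  SimpleGraph.fromRel fun i j =>
    ((i : ℕ), (j : ℕ)) ∈ [(0, 1), (0, 2), (1, 2), (1, 3), (2, 4)]

/-- Build a claw embedding from explicit vertices. -/
lemma claw_emb {V : Type*} (G : SimpleGraph V) (c x a b : V)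
    (h1 : G.Adj c x) (h2 : G.Adj c a) (h3 : G.Adj c b)
    (h4 : ¬G.Adj x a) (h5 : ¬G.Adj x b) (h6 : ¬G.Adj a b)
    (hxa : x ≠ a) (hxb : x ≠ b) (hab : a ≠ b) :
    Nonempty (clawGraph ↪g G) := by
  have h4' : ¬G.Adj a x := fun h => h4 h.symm
  have h5' : ¬G.Adj b x := fun h => h5 h.symm
  have h6' : ¬G.Adj b a := fun h => h6 h.symm
  refine ⟨⟨⟨![c, x, a, b], ?_⟩, ?_⟩⟩
  · intro i j hij
    fin_cases i <;> fin_cases j <;> simp_all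
  · intro i j
    change G.Adj (![c, x, a, b] i) (![c, x, a, b] j) ↔ _
    fin_cases i <;> fin_cases j <;>
      simp [clawGraph, SimpleGraph.fromRel_adj, h1, h2, h3, h1.symm, h2.symm, h3.symm,
        h4, h5, h6, h4', h5', h6', G.irrefl] <;> decide

/-- Build a bull embedding from explicit vertices: triangle `t0 t1 t2`,
pendant `p1` on `t1`, pendant `p2` on `t2`. -/
lemma bull_emb {V : Type*} (G : SimpleGraph V) (t0 t1 t2 p1 p2 : V)
    (e01 : G.Adj t0 t1) (e02 : G.Adj t0 t2) (e12 : G.Adj t1 t2)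
    (e13 : G.Adj t1 p1) (e24 : G.Adj t2 p2)
    (n03 : ¬G.Adj t0 p1) (n04 : ¬G.Adj t0 p2) (n14 : ¬G.Adj t1 p2)
    (n23 : ¬G.Adj t2 p1) (n34 : ¬G.Adj p1 p2)
    (d03 : t0 ≠ p1) (d04 : t0 ≠ p2) (d14 : t1 ≠ p2) (d23 : t2 ≠ p1) (d34 : p1 ≠ p2) :
    Nonempty (bullGraph ↪g G) := by
  have n03' : ¬G.Adj p1 t0 := fun h => n03 h.symm
  have n04' : ¬G.Adj p2 t0 := fun h => n04 h.symm
  have n14' : ¬G.Adj p2 t1 := fun h => n14 h.symm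
  have n23' : ¬G.Adj p1 t2 := fun h => n23 h.symm
  have n34' : ¬G.Adj p2 p1 := fun h => n34 h.symm
  refine ⟨⟨⟨![t0, t1, t2, p1, p2], ?_⟩, ?_⟩⟩
  · intro i j hij
    fin_cases i <;> fin_cases j <;> simp_all
  · intro i j
    change G.Adj (![t0, t1, t2, p1, p2] i) (![t0, t1, t2, p1, p2] j) ↔ _
    fin_cases i <;> fin_cases j <;>
      simp [bullGraph, SimpleGraph.fromRel_adj, e01, e02, e12, e13, e24,
        e01.symm, e02.symm, e12.symm, e13.symm, e24.symm,
        n03, n04, n14, n23, n34, n03', n04', n14', n23', n34', G.irrefl] <;> decide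

/-- The path graph is isomorphic to itself under reversal. -/
def pathRev (n : ℕ) : SimpleGraph.pathGraph n ≃g SimpleGraph.pathGraph n where
  toEquiv := (Fin.revPerm : Equiv.Perm (Fin n))
  map_rel_iff' := by
    intro a b
    simp only [SimpleGraph.pathGraph_adj, Fin.revPerm_apply, Fin.val_rev, Equiv.coe_fn_mk]
    have ha := a.isLt
    have hb := b.isLt
    omega

/-- Extend an induced path by two vertices at its start. -/
lemma path_extend {V : Type*} (G : SimpleGraph V) {n : ℕ} (hn : 2 ≤ n)
    (f : SimpleGraph.pathGraph n ↪g G) (x y : V)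
    (hxy : G.Adj x y)
    (hy0 : G.Adj y (f ⟨0, by omega⟩))
    (hyj : ∀ j : Fin n, (j : ℕ) ≠ 0 → ¬G.Adj y (f j))
    (hynot : ∀ j : Fin n, y ≠ f j)
    (hxj : ∀ j : Fin n, ¬G.Adj x (f j))
    (hxnot : ∀ j : Fin n, x ≠ f j) :
    Nonempty (SimpleGraph.pathGraph (n + 2) ↪g G) := by
  have hfadj : ∀ i j : Fin n, G.Adj (f i) (f j) ↔ ((i : ℕ) + 1 = j ∨ (j : ℕ) + 1 = i) := by
    intro i j
    rw [f.map_rel_iff, SimpleGraph.pathGraph_adj]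
  have hn2 : ∀ k : Fin (n+2), ¬(k:ℕ) = 0 → ¬(k:ℕ) = 1 → (k:ℕ) - 2 < n := by
    intro k h0 h1; have := k.isLt; omega
  set g : Fin (n + 2) → V := fun k =>
    if h0 : (k : ℕ) = 0 then x
    else if h1 : (k : ℕ) = 1 then y
    else f ⟨(k : ℕ) - 2, hn2 k h0 h1⟩ with hg
  refine ⟨⟨⟨g, ?_⟩, ?_⟩⟩
  · intro a b hab
    have ha := a.isLt
    have hb := b.isLt
    simp only [hg] at hab
    split_ifs at hab with h1 h2 h3 h4 h5 h6 h7 h8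
    · exact Fin.ext (by omega)
    · exact absurd hab hxy.ne
    · exact absurd hab (hxnot _)
    · exact absurd hab.symm hxy.ne
    · exact Fin.ext (by omega)
    · exact absurd hab (hynot _)
    · exact absurd hab.symm (hxnot _)
    · exact absurd hab.symm (hynot _)
    · have h9 := congrArg Fin.val (f.injective hab)
      simp only [Fin.val_mk] at h9
      exact Fin.ext (by omega)
  · intro a b
    have ha := a.isLt
    have hb := b.isLt
    rw [SimpleGraph.pathGraph_adj]
    simp only [Function.Embedding.coeFn_mk, hg]
    split_ifs with h1 h2 h3 h4 h5 h6 h7 h8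
    · simp [G.irrefl]; omega
    · simp [hxy]; omega
    · constructor
      · intro h; exact absurd h (hxj _)
      · intro h; omega
    · simp [hxy.symm]; omega
    · simp [G.irrefl]; omega
    · constructor
      · intro h
        by_contra hc
        push_neg at hc
        exact hyj _ (show (b:ℕ) - 2 ≠ 0 by omega) h
      · intro h
        convert hy0 using 3
        omega
    · constructor
      · intro h; exact absurd h.symm (hxj _)
      · intro h; omega
    · constructor
      · intro h
        by_contra hc
        push_neg at hc
        exact hyj _ (show (a:ℕ) - 2 ≠ 0 by omega) h.symm
      · intro h
        convert hy0.symm using 3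
        omega
    · rw [hfadj]
      simp only [Fin.val_mk]
      omega

/-- In a connected {claw, bull}-free graph of maximum degree at most `Δ`, a
maximum-length induced path with at least `15` vertices (i.e. of length at least `14`)
dominates the graph. -/
theorem max_induced_path_dominates {V : Type*} [Fintype V] (G : SimpleGraph V)
    [DecidableRel G.Adj]
    (hconn : G.Connected)
    (hclaw : IsEmpty (clawGraph ↪g G)) (hbull : IsEmpty (bullGraph ↪g G))
    (Δ : ℕ) (hdeg : ∀ v, G.degree v ≤ Δ)
    (n : ℕ) (hn : 15 ≤ n) (f : SimpleGraph.pathGraph n ↪g G)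
    (hmax : ∀ m : ℕ, Nonempty (SimpleGraph.pathGraph m ↪g G) → m ≤ n) :
    ∀ v : V, ∃ i : Fin n, v = f i ∨ G.Adj (f i) v := by
  have hfadj : ∀ i j : Fin n, G.Adj (f i) (f j) ↔ ((i : ℕ) + 1 = j ∨ (j : ℕ) + 1 = i) := by
    intro i j
    rw [f.map_rel_iff, SimpleGraph.pathGraph_adj]
  by_contra hcon
  push_neg at hcon
  obtain ⟨v, hv⟩ := hcon
  set D : Set V := {w | ∃ i : Fin n, w = f i ∨ G.Adj (f i) w} with hD
  have hf0 : f ⟨0, by omega⟩ ∈ D := ⟨⟨0, by omega⟩, Or.inl rfl⟩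
  have hvD : v ∉ D := by
    rintro ⟨i, hi⟩
    rcases hi with h | h
    · exact (hv i).1 h
    · exact (hv i).2 h
  obtain ⟨p⟩ := hconn.preconnected (f ⟨0, by omega⟩) v
  obtain ⟨d, -, hdfst, hdsnd⟩ := p.exists_boundary_dart D hf0 hvD
  set y := d.fst with hy
  set x := d.snd with hx
  have hyx : G.Adj y x := d.adj
  have hxfacts : ∀ i : Fin n, x ≠ f i ∧ ¬G.Adj (f i) x := by
    intro i
    constructor
    · intro h; exact hdsnd ⟨i, Or.inl h⟩
    · intro h; exact hdsnd ⟨i, Or.inr h⟩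
  have hynot : ∀ i : Fin n, y ≠ f i := by
    intro i h
    exact hdsnd ⟨i, Or.inr (h ▸ hyx)⟩
  obtain ⟨i₀, hi₀⟩ := hdfst
  have hyadj : ∃ i : Fin n, G.Adj y (f i) := by
    rcases hi₀ with h | h
    · exact absurd h (hynot i₀)
    · exact ⟨i₀, h.symm⟩
  classical
  set S : Finset (Fin n) := Finset.univ.filter (fun j => G.Adj y (f j)) with hS
  have hSmem : ∀ j : Fin n, j ∈ S ↔ G.Adj y (f j) := by
    intro j; simp [hS]
  have hSne : S.Nonempty := by
    obtain ⟨i, hi⟩ := hyadj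
    exact ⟨i, (hSmem i).2 hi⟩
  set i : Fin n := S.min' hSne with hi
  have hiS : G.Adj y (f i) := (hSmem i).1 (S.min'_mem hSne)
  have himin : ∀ j ∈ S, i ≤ j := fun j hj => S.min'_le j hj
  -- no neighbor at distance ≥ 2 from i, else a claw
  have hbound : ∀ j : Fin n, G.Adj y (f j) → (j : ℕ) ≤ (i : ℕ) + 1 := by
    intro j hj
    by_contra hc
    push_neg at hc
    refine hclaw.false (claw_emb G y x (f i) (f j) hyx hiS hj
      ?_ ?_ ?_ ?_ ?_ ?_).some
    · intro h; exact (hxfacts i).2 h.symm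
    · intro h; exact (hxfacts j).2 h.symm
    · rw [hfadj]; omega
    · exact (hxfacts i).1
    · exact (hxfacts j).1
    · intro h
      have := congrArg Fin.val (f.injective h)
      omega
  by_cases hsingle : ∀ j : Fin n, G.Adj y (f j) → j = i
  · -- y has a unique neighbor f i on the path
    by_cases h0 : (i : ℕ) = 0
    · -- extend the path at the start
      have hlong : Nonempty (SimpleGraph.pathGraph (n + 2) ↪g G) := by
        refine path_extend G (by omega) f x y (hyx.symm) ?_ ?_ hynot
          (fun j h => (hxfacts j).2 h.symm) (fun j => (hxfacts j).1)
        · have he : (⟨0, by omega⟩ : Fin n) = i := Fin.ext h0.symm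
          rw [he]; exact hiS
        · intro j hj h
          have := congrArg Fin.val (hsingle j h)
          omega
      have := hmax (n + 2) hlong
      omega
    · by_cases h1 : (i : ℕ) = n - 1
      · -- extend the path at the end, via reversal
        have hlong : Nonempty (SimpleGraph.pathGraph (n + 2) ↪g G) := by
          set f' : SimpleGraph.pathGraph n ↪g G := f.comp (pathRev n).toEmbedding with hf'
          have hf'app : ∀ j : Fin n, f' j = f j.rev := fun j => rfl
          refine path_extend G (by omega) f' x y (hyx.symm) ?_ ?_
            (fun j => hf'app j ▸ hynot j.rev)
            (fun j h => (hxfacts j.rev).2 ((hf'app j ▸ h).symm))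
            (fun j => hf'app j ▸ (hxfacts j.rev).1)
          · rw [hf'app]
            have he : (⟨0, by omega⟩ : Fin n).rev = i := by
              apply Fin.ext
              rw [Fin.val_rev]
              simp only [Fin.val_mk]
              omega
            rw [he]; exact hiS
          · intro j hj h
            rw [hf'app] at h
            have := congrArg Fin.val (hsingle j.rev h)
            rw [Fin.val_rev] at this
            have hjl := j.isLt
            omega
        have := hmax (n + 2) hlong
        omega
      · -- claw centered at f i
        have hil : (i : ℕ) < n := i.isLt
        have h1' : (i : ℕ) + 1 < n := by omega
        have h0' : (i : ℕ) - 1 < n := by omega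
        refine hclaw.false (claw_emb G (f i) y (f ⟨(i : ℕ) - 1, h0'⟩) (f ⟨(i : ℕ) + 1, h1'⟩)
          hiS.symm ?_ ?_ ?_ ?_ ?_ ?_ ?_ ?_).some
        · rw [hfadj]; simp only [Fin.val_mk]; omega
        · rw [hfadj]; left; simp
        · intro h
          have := congrArg Fin.val (hsingle _ h)
          simp only [Fin.val_mk] at this
          omega
        · intro h
          have := congrArg Fin.val (hsingle _ h)
          simp only [Fin.val_mk] at this
          omega
        · rw [hfadj]; simp only [Fin.val_mk]; omega
        · exact hynot _
        · exact hynot _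
        · intro h
          have := congrArg Fin.val (f.injective h)
          simp only [Fin.val_mk] at this
          omega
  · -- y is adjacent to both f i and f (i+1) : bull
    push_neg at hsingle
    obtain ⟨j, hjadj, hjne⟩ := hsingle
    have hjS : j ∈ S := (hSmem j).2 hjadj
    have hjval : (j : ℕ) = (i : ℕ) + 1 := by
      have hle1 := himin j hjS
      have hle2 := hbound j hjadj
      have hne := Fin.val_ne_of_ne hjne
      omega
    have hil : (i : ℕ) < n := i.isLt
    have hjl : (j : ℕ) < n := j.isLt
    have hynadj : ∀ k : Fin n, (k : ℕ) ≠ (i : ℕ) → (k : ℕ) ≠ (i : ℕ) + 1 → ¬G.Adj y (f k) := by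
      intro k hk1 hk2 h
      have hb := hbound k h
      have hm : i ≤ k := himin k ((hSmem k).2 h)
      have : (i : ℕ) ≤ (k : ℕ) := hm
      omega
    by_cases h2 : (i : ℕ) + 2 < n
    · -- pendant f (i+2)
      refine hbull.false (bull_emb G (f i) y (f j) x (f ⟨(i : ℕ) + 2, h2⟩)
        hiS.symm ?_ hjadj hyx ?_ ?_ ?_ ?_ ?_ ?_ ?_ ?_ ?_ ?_ ?_).some
      · rw [hfadj]; omega
      · rw [hfadj]; simp only [Fin.val_mk]; omega
      · exact (hxfacts i).2
      · rw [hfadj]; simp only [Fin.val_mk]; omega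
      · exact hynadj _ (show (i:ℕ)+2 ≠ (i:ℕ) by omega) (show (i:ℕ)+2 ≠ (i:ℕ)+1 by omega)
      · exact (hxfacts j).2
      · intro h; exact (hxfacts _).2 h.symm
      · exact fun h => (hxfacts i).1 h.symm
      · intro h
        have := congrArg Fin.val (f.injective h)
        simp only [Fin.val_mk] at this
        omega
      · exact hynot _
      · exact fun h => (hxfacts j).1 h.symm
      · exact (hxfacts _).1
    · -- pendant f (i-1); here i = n - 2 so i ≥ 1
      have hi1 : 1 ≤ (i : ℕ) := by omega
      have h0' : (i : ℕ) - 1 < n := by omega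
      refine hbull.false (bull_emb G (f j) y (f i) x (f ⟨(i : ℕ) - 1, h0'⟩)
        hjadj.symm ?_ hiS hyx ?_ ?_ ?_ ?_ ?_ ?_ ?_ ?_ ?_ ?_ ?_).some
      · rw [hfadj]; omega
      · rw [hfadj]; simp only [Fin.val_mk]; omega
      · exact (hxfacts j).2
      · rw [hfadj]; simp only [Fin.val_mk]; omega
      · exact hynadj _ (show (i:ℕ)-1 ≠ (i:ℕ) by omega) (show (i:ℕ)-1 ≠ (i:ℕ)+1 by omega)
      · exact (hxfacts i).2
      · intro h; exact (hxfacts _).2 h.symm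
      · exact fun h => (hxfacts j).1 h.symm
      · intro h
        have := congrArg Fin.val (f.injective h)
        simp only [Fin.val_mk] at this
        omega
      · exact hynot _
      · exact fun h => (hxfacts i).1 h.symm
      · exact (hxfacts _).1
end
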